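/- The maps s_x : ℝ² → ℝ² defined by s_{(a,b)}(a',b') = (2a − a', 2cos(a − a')·b − b') satisfy the symmetric space axioms: each s_x is an involution, x is an isolated fixed point of s_x, and s_x ∘ s_y = s_{s_x(y)} ∘ s_x for all x, y. -/

import Mathlib

/-- The symmetry of the non-exponential solvable symmetric space `ℝ²`:
`s_{(a,b)}(a',b') = (2a − a', 2cos(a − a')·b − b')`. -/
noncomputable def symCos (z p : ℝ × ℝ) : ℝ × ℝ :=
  (2 * z.1 - p.1, 2 * Real.cos (z.1 - p.1) * z.2 - p.2)

/-!
The first coordinate is the point reflection `a' ↦ 2a − a'` of `ℝ`, which preserves the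
distance `|a − a'|`; hence the cosine factors are unchanged along the reflection, and the
second coordinates reduce to the product-to-sum formula
`2 cos u cos v = cos (u − v) + cos (u + v)`.
-/

namespace symCos

open Real

@[simp]
theorem fst (z p : ℝ × ℝ) : (symCos z p).1 = 2 * z.1 - p.1 := rfl

@[simp]
theorem snd (z p : ℝ × ℝ) : (symCos z p).2 = 2 * cos (z.1 - p.1) * z.2 - p.2 := rfl

theorem symCos_symCos (x y : ℝ × ℝ) : symCos x (symCos x y) = y := by
  have hcos : cos (x.1 - (2 * x.1 - y.1)) = cos (x.1 - y.1) := by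
    rw [← cos_neg]; ring_nf
  ext
  · simp only [fst]; ring
  · simp only [snd, fst, hcos]; ring

theorem self (x : ℝ × ℝ) : symCos x x = x := by
  ext
  · simp only [fst]; ring
  · simp only [snd, sub_self, cos_zero]; ring

theorem eq_self_iff {x y : ℝ × ℝ} : symCos x y = y ↔ y = x := by
  refine ⟨fun hfix => ?_, fun h => h ▸ self x⟩
  have h₁ : x.1 = y.1 := by linarith [congrArg Prod.fst hfix, fst x y]
  have h₂ := congrArg Prod.snd hfix
  rw [snd, h₁, sub_self, cos_zero] at h₂
  exact Prod.ext h₁.symm (by linarith)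

theorem symCos_symCos_eq_symCos_symCos (x y z : ℝ × ℝ) :
    symCos x (symCos y z) = symCos (symCos x y) (symCos x z) := by
  have hx : x.1 - (2 * y.1 - z.1) = (x.1 - y.1) - (y.1 - z.1) := by ring
  have hxz : x.1 - z.1 = (x.1 - y.1) + (y.1 - z.1) := by ring
  have hyz : 2 * x.1 - y.1 - (2 * x.1 - z.1) = -(y.1 - z.1) := by ring
  ext
  · simp only [fst]; ring
  · simp only [snd, fst, hx, hxz, hyz, cos_neg]
    linear_combination -2 * x.2 * two_mul_cos_mul_cos (x.1 - y.1) (y.1 - z.1)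

end symCos

/-- The maps `s_{(a,b)}(a',b') = (2a − a', 2cos(a − a')·b − b')` make `ℝ²` a symmetric
space: each `s_x` is an involution, `x` is an isolated fixed point of `s_x`, and
`s_x(s_y z) = s_{s_x y}(s_x z)`. -/
theorem cos_space_is_symmetric_space :
    (∀ x y : ℝ × ℝ, symCos x (symCos x y) = y) ∧
    (∀ x : ℝ × ℝ, symCos x x = x) ∧
    (∀ x : ℝ × ℝ, ∃ U ∈ nhds x, ∀ y ∈ U, symCos x y = y → y = x) ∧
    (∀ x y z : ℝ × ℝ, symCos x (symCos y z) = symCos (symCos x y) (symCos x z)) :=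
  ⟨symCos.symCos_symCos, symCos.self,
    fun _ => ⟨Set.univ, Filter.univ_mem, fun _ _ => symCos.eq_self_iff.mp⟩,
    symCos.symCos_symCos_eq_symCos_symCos⟩
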